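/- arXiv:2502.13039 — 3 statements merged into one kernel-verified Lean document; each statement's English description precedes it below -/
import Mathlib

section
/- Let h and n be positive integers with h ≥ 2, let d be a positive integer, and let θ₁, …, θₙ be vectors in ℝ^d that are linearly independent over ℚ. Let ε > 0 be a real number such that ‖∑_{i=1}^n (x_i − y_i) θ_i‖_∞ ≥ ε for all x ≠ y in 𝒳_{h,n}. Let q and m be positive integers with q > 2hm/ε, and let a₁, …, aₙ ∈ ℤ^d be lattice points such that |a_{i,j} − q·θ_{i,j}| ≤ m for all i ∈ [1,n] and j ∈ [1,d]. Then A = {a₁, …, aₙ} is a B_h-set of lattice points in ℤ^d; that is, for all x, y ∈ 𝒳_{h,n}, if ∑_{i=1}^n x_i a_i = ∑_{i=1}^n y_i a_i then x = y. -/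
open Finset

/- If `q • θ i` is within `m` of the lattice point `a i`, then every integer relation among the
`a i` is an approximate relation among the `θ i`, with error `m / q` per unit of coefficient.
With the separation `ε` of the `θ`-combinations coming from two distinct elements of `𝒳_{h,n}`,
whose coefficient vector has `ℓ¹`-norm at most `2h`, this forces `q ε ≤ 2hm`, which the
choice of `q` excludes. -/

theorem norm_smul_sum_smul_le_of_sum_smul_eq_zero {ι E : Type*} [Fintype ι]
    [SeminormedAddCommGroup E] [NormedSpace ℝ E] (θ u : ι → E) (c : ι → ℝ) (q m : ℝ)
    (hu : ∀ i, ‖u i - q • θ i‖ ≤ m) (hc : ∑ i, c i • u i = 0) :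
    ‖q • ∑ i, c i • θ i‖ ≤ m * ∑ i, |c i| := by
  have hrel : q • ∑ i, c i • θ i = -∑ i, c i • (u i - q • θ i) := by
    simp only [smul_sub, sum_sub_distrib, hc, smul_sum, smul_comm q]
    abel
  calc ‖q • ∑ i, c i • θ i‖ ≤ ∑ i, ‖c i • (u i - q • θ i)‖ := by
        rw [hrel, norm_neg]; exact norm_sum_le _ _
    _ ≤ ∑ i, |c i| * m := by
        gcongr with i
        rw [norm_smul, Real.norm_eq_abs]
        exact mul_le_mul_of_nonneg_left (hu i) (abs_nonneg _)
    _ = m * ∑ i, |c i| := by rw [← sum_mul, mul_comm]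

theorem sum_abs_natCast_sub_le {ι : Type*} [Fintype ι] (x y : ι → ℕ) :
    ∑ i, |(x i : ℝ) - y i| ≤ ∑ i, x i + ∑ i, y i := by
  push_cast
  rw [← sum_add_distrib]
  gcongr with i
  exact (abs_sub _ _).trans_eq (by simp)

theorem sum_natCast_sub_smul_intCast_eq_zero {ι κ : Type*} [Fintype ι] (x y : ι → ℕ)
    (a : ι → κ → ℤ) (hxy : ∑ i, x i • a i = ∑ i, y i • a i) :
    ∑ i, ((x i : ℝ) - y i) • (fun j => (a i j : ℝ)) = 0 := by
  have hcast := congrArg (AddMonoidHom.compLeft (Int.castAddHom ℝ) κ) hxy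
  simp only [map_sum, map_nsmul] at hcast
  simp only [sub_smul, sum_sub_distrib, Nat.cast_smul_eq_nsmul]
  exact sub_eq_zero.mpr hcast

theorem norm_intCast_sub_smul_le {κ : Type*} [Fintype κ] (a : κ → ℤ) (θ : κ → ℝ) (q m : ℝ)
    (ha : ∀ j, |(a j : ℝ) - q * θ j| ≤ m) (hm : 0 ≤ m) :
    ‖(fun j => (a j : ℝ)) - q • θ‖ ≤ m :=
  (pi_norm_le_iff_of_nonneg hm).mpr fun j => by simpa using ha j

theorem bh_set_construction_lattice_general
    (h n d : ℕ)
    (θ : Fin n → (Fin d → ℝ))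
    (ε : ℝ) (hε : 0 < ε)
    (hsep : ∀ x y : Fin n → ℕ, (∑ i, x i = h) → (∑ i, y i = h) → x ≠ y →
      ε ≤ ‖∑ i, (((x i : ℝ) - (y i : ℝ)) • θ i)‖)
    (q m : ℕ) (hq : 0 < q)
    (hqε : (q : ℝ) > 2 * h * m / ε)
    (a : Fin n → (Fin d → ℤ))
    (ha : ∀ i j, |(a i j : ℝ) - (q : ℝ) * θ i j| ≤ m) :
    ∀ x y : Fin n → ℕ, (∑ i, x i = h) → (∑ i, y i = h) →
      (∑ i, x i • a i) = (∑ i, y i • a i) → x = y := by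
  intro x y hx hy hxy
  by_contra hne
  have hq' : (0 : ℝ) < q := by exact_mod_cast hq
  have hrel := norm_smul_sum_smul_le_of_sum_smul_eq_zero θ _ (fun i => (x i : ℝ) - y i) q m
    (fun i => norm_intCast_sub_smul_le (a i) (θ i) q m (ha i) m.cast_nonneg)
    (sum_natCast_sub_smul_intCast_eq_zero x y a hxy)
  have hl1 : ∑ i, |(x i : ℝ) - y i| ≤ 2 * h := by
    have := sum_abs_natCast_sub_le x y
    rw [hx, hy] at this
    linarith
  have hupper : q * ‖∑ i, ((x i : ℝ) - y i) • θ i‖ ≤ 2 * h * m := by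
    rw [norm_smul, Real.norm_eq_abs, abs_of_pos hq'] at hrel
    nlinarith [m.cast_nonneg (α := ℝ)]
  have hlower : q * ε ≤ q * ‖∑ i, ((x i : ℝ) - y i) • θ i‖ :=
    mul_le_mul_of_nonneg_left (hsep x y hx hy hne) hq'.le
  have hgap : 2 * h * m < q * ε := by rwa [gt_iff_lt, div_lt_iff₀ hε] at hqε
  linarith

/-- Construction of `B_h`-sets of lattice points in `ℤ^d` from a
ℚ-linearly independent family of vectors in `ℝ^d`. -/
theorem bh_set_construction_lattice
    (h n d : ℕ) (hh : 2 ≤ h) (hn : 0 < n) (hd : 0 < d)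
    (θ : Fin n → (Fin d → ℝ)) (hθ : LinearIndependent ℚ θ)
    (ε : ℝ) (hε : 0 < ε)
    (hsep : ∀ x y : Fin n → ℕ, (∑ i, x i = h) → (∑ i, y i = h) → x ≠ y →
      ε ≤ ‖∑ i, (((x i : ℝ) - (y i : ℝ)) • θ i)‖)
    (q m : ℕ) (hq : 0 < q) (hm : 0 < m)
    (hqε : (q : ℝ) > 2 * h * m / ε)
    (a : Fin n → (Fin d → ℤ))
    (ha : ∀ i j, |(a i j : ℝ) - (q : ℝ) * θ i j| ≤ m) :
    ∀ x y : Fin n → ℕ, (∑ i, x i = h) → (∑ i, y i = h) →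
      (∑ i, x i • a i) = (∑ i, y i • a i) → x = y :=
  bh_set_construction_lattice_general h n d θ ε hε hsep q m hq hqε a ha
end

section
/- Let h and n be positive integers with h ≥ 2, and let θ₁, …, θₙ be real numbers that are linearly independent over ℚ. Let ε > 0 be a real number such that |∑_{i=1}^n (x_i − y_i) θ_i| ≥ ε for all x ≠ y in 𝒳_{h,n}. Let q and m be positive integers with q > 2hm/ε, and let a₁, …, aₙ be integers such that |a_i − q·θ_i| ≤ m for all i ∈ [1,n]. Then A = {a₁, …, aₙ} is a B_h-set of integers: for all x, y ∈ 𝒳_{h,n}, if ∑_{i=1}^n x_i a_i = ∑_{i=1}^n y_i a_i then x = y; moreover max_{i ∈ [1,n]} |a_i| ≤ q·(max_{i ∈ [1,n]} |θ_i|) + m. -/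
/-! If `∑ xᵢ aᵢ = ∑ yᵢ aᵢ`, then `q · ∑ (xᵢ - yᵢ) θᵢ = ∑ (xᵢ - yᵢ)(q θᵢ - aᵢ)`, whose absolute
value is at most `2hm` because `∑ |xᵢ - yᵢ| ≤ 2h`. Since `q ε > 2hm`, the separation hypothesis
forces `x = y`. The size bound is the triangle inequality `|aᵢ| ≤ |aᵢ - q θᵢ| + q |θᵢ|`. -/

open Finset

variable {ι : Type*} [Fintype ι]

theorem abs_sum_sub_mul_le_of_sum_eq {x y : ι → ℕ} {h : ℕ} (hx : ∑ i, x i = h)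
    (hy : ∑ i, y i = h) {c : ι → ℝ} {m : ℝ} (hc : ∀ i, |c i| ≤ m) :
    |∑ i, ((x i : ℝ) - y i) * c i| ≤ 2 * h * m :=
  calc |∑ i, ((x i : ℝ) - y i) * c i|
      ≤ ∑ i, |((x i : ℝ) - y i) * c i| := abs_sum_le_sum_abs _ _
    _ ≤ ∑ i, ((x i : ℝ) + y i) * m := by
        gcongr with i
        rw [abs_mul]
        have hxy : |(x i : ℝ) - y i| ≤ x i + y i := by simpa using abs_sub (x i : ℝ) (y i)
        exact mul_le_mul hxy (hc i) (abs_nonneg _) (by positivity)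
    _ = 2 * h * m := by
        rw [← sum_mul, sum_add_distrib]
        push_cast [← Nat.cast_sum, hx, hy]
        ring

theorem abs_mul_sum_sub_mul_le_of_sum_mul_eq {θ a : ι → ℝ} {q m : ℝ}
    (ha : ∀ i, |a i - q * θ i| ≤ m) {x y : ι → ℕ} {h : ℕ} (hx : ∑ i, x i = h)
    (hy : ∑ i, y i = h) (hxy : ∑ i, (x i : ℝ) * a i = ∑ i, (y i : ℝ) * a i) :
    |q * ∑ i, ((x i : ℝ) - y i) * θ i| ≤ 2 * h * m := by
  have hrewrite : q * ∑ i, ((x i : ℝ) - y i) * θ i =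
      ∑ i, ((x i : ℝ) - y i) * (q * θ i - a i) := by
    simp only [mul_sub, sum_sub_distrib, mul_sum, sub_mul, hxy]
    ring_nf
  rw [hrewrite]
  exact abs_sum_sub_mul_le_of_sum_eq hx hy fun i => abs_sub_comm (a i) _ ▸ ha i

theorem iSup_abs_le_mul_iSup_abs_add {θ a : ι → ℝ} {q m : ℝ} (hq : 0 ≤ q) (hm : 0 ≤ m)
    (ha : ∀ i, |a i - q * θ i| ≤ m) : ⨆ i, |a i| ≤ q * (⨆ i, |θ i|) + m := by
  refine Real.iSup_le (fun i => ?_) (by positivity [Real.iSup_nonneg fun i => abs_nonneg (θ i)])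
  have hθ : |θ i| ≤ ⨆ j, |θ j| := le_ciSup (Set.finite_range fun j => |θ j|).bddAbove i
  calc |a i| ≤ |a i - q * θ i| + |q * θ i| := by
        simpa using abs_add_le (a i - q * θ i) (q * θ i)
    _ ≤ m + q * ⨆ j, |θ j| := by
        rw [abs_mul, abs_of_nonneg hq]
        gcongr
        exact ha i
    _ = q * (⨆ j, |θ j|) + m := add_comm _ _

theorem bh_set_construction_integers_general
    (h n : ℕ)
    (θ : Fin n → ℝ)
    (ε : ℝ) (hε : 0 < ε)
    (hsep : ∀ x y : Fin n → ℕ, (∑ i, x i = h) → (∑ i, y i = h) → x ≠ y →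
      ε ≤ |∑ i, (((x i : ℝ) - (y i : ℝ)) * θ i)|)
    (q m : ℕ)
    (hqε : (q : ℝ) > 2 * h * m / ε)
    (a : Fin n → ℤ)
    (ha : ∀ i, |(a i : ℝ) - (q : ℝ) * θ i| ≤ m) :
    (∀ x y : Fin n → ℕ, (∑ i, x i = h) → (∑ i, y i = h) →
      (∑ i, (x i : ℤ) * a i) = (∑ i, (y i : ℤ) * a i) → x = y) ∧
      (⨆ i, |(a i : ℝ)|) ≤ (q : ℝ) * (⨆ i, |θ i|) + m := by
  refine ⟨fun x y hx hy hxy => ?_, iSup_abs_le_mul_iSup_abs_add q.cast_nonneg m.cast_nonneg ha⟩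
  by_contra hne
  have hupper := abs_mul_sum_sub_mul_le_of_sum_mul_eq ha hx hy (by exact_mod_cast hxy)
  rw [abs_mul, abs_of_nonneg q.cast_nonneg] at hupper
  have hlower := mul_le_mul_of_nonneg_left (hsep x y hx hy hne) q.cast_nonneg
  have hqε' : 2 * h * m < (q : ℝ) * ε := (div_lt_iff₀ hε).mp hqε
  linarith

/-- Construction of `B_h`-sets of integers from a ℚ-linearly
independent family of real numbers, together with the size bound
`max_i |a i| ≤ q · (max_i |θ i|) + m`. -/
theorem bh_set_construction_integers
    (h n : ℕ) (hh : 2 ≤ h) (hn : 0 < n)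
    (θ : Fin n → ℝ) (hθ : LinearIndependent ℚ θ)
    (ε : ℝ) (hε : 0 < ε)
    (hsep : ∀ x y : Fin n → ℕ, (∑ i, x i = h) → (∑ i, y i = h) → x ≠ y →
      ε ≤ |∑ i, (((x i : ℝ) - (y i : ℝ)) * θ i)|)
    (q m : ℕ) (hq : 0 < q) (hm : 0 < m)
    (hqε : (q : ℝ) > 2 * h * m / ε)
    (a : Fin n → ℤ)
    (ha : ∀ i, |(a i : ℝ) - (q : ℝ) * θ i| ≤ m) :
    (∀ x y : Fin n → ℕ, (∑ i, x i = h) → (∑ i, y i = h) →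
      (∑ i, (x i : ℤ) * a i) = (∑ i, (y i : ℤ) * a i) → x = y) ∧
      (⨆ i, |(a i : ℝ)|) ≤ (q : ℝ) * (⨆ i, |θ i|) + m :=
  bh_set_construction_integers_general h n θ ε hε hsep q m hqε a ha
end

section
/- Let n be a positive integer and let θ₁, …, θₙ be positive real numbers that are linearly independent over ℚ. Let g ≥ 2 be an integer, and for each positive integer ℓ and each i ∈ [1,n] let a_{i,ℓ} = ⌊g^ℓ · θ_i⌋ be the integer part of g^ℓ θ_i. Then there exists ℓ₀ = ℓ₀(θ₁,…,θₙ) such that for all ℓ ≥ ℓ₀ the set B(ℓ) = {a_{1,ℓ}, …, a_{n,ℓ}} is a Sidon set of positive integers; that is, for all x, y ∈ 𝒳_{2,n}, if ∑_{i=1}^n x_i a_{i,ℓ} = ∑_{i=1}^n y_i a_{i,ℓ} then x = y. -/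
/-!
For `x ≠ y` in `𝒳_{2,n}`, ℚ-independence makes `∑ (x i - y i) θ i` nonzero, and
`G⁻¹ ∑ (x i - y i) ⌊G θ i⌋` tends to this number as `G → ∞`, so the two floor sums differ for
all large `G`. As `𝒳_{2,n}` is finite, one threshold serves all pairs; take `G = g ^ ℓ`.
-/

open Filter Topology

theorem tendsto_floor_mul_div_atTop {R : Type*} [TopologicalSpace R] [Field R] [LinearOrder R]
    [IsStrictOrderedRing R] [OrderTopology R] [FloorRing R] (a : R) :
    Tendsto (fun x ↦ (⌊a * x⌋ : R) / x) atTop (𝓝 a) := by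
  have hlower : Tendsto (fun x : R ↦ a - x⁻¹) atTop (𝓝 a) := by
    simpa using tendsto_const_nhds (x := a) |>.sub tendsto_inv_atTop_zero
  refine tendsto_of_tendsto_of_tendsto_of_le_of_le' hlower tendsto_const_nhds ?_ ?_
  · filter_upwards [eventually_gt_atTop 0] with x hx
    rw [le_div_iff₀ hx, sub_mul, inv_mul_cancel₀ hx.ne']
    linarith [Int.lt_floor_add_one (a * x)]
  · filter_upwards [eventually_gt_atTop 0] with x hx
    rw [div_le_iff₀ hx]
    exact Int.floor_le _

theorem eventually_floor_mul_pos {ι : Type*} [Finite ι] {θ : ι → ℝ} (hθ : ∀ i, 0 < θ i) :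
    ∀ᶠ G : ℝ in atTop, ∀ i, 0 < ⌊G * θ i⌋ :=
  eventually_all.2 fun i ↦ ((tendsto_id.atTop_mul_const (hθ i)).eventually_ge_atTop 1).mono
    fun _ h ↦ Int.floor_pos.2 h

section

variable {ι : Type*} [Fintype ι]

theorem LinearIndependent.sum_intCast_mul_ne_zero {θ : ι → ℝ} (hθ : LinearIndependent ℚ θ)
    {c : ι → ℤ} (hc : c ≠ 0) : ∑ i, (c i : ℝ) * θ i ≠ 0 := by
  contrapose! hc
  funext i
  exact Fintype.linearIndependent_iff.mp (hθ.restrict_scalars' ℤ) c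
    (by simpa only [zsmul_eq_mul] using hc) i

theorem tendsto_sum_mul_floor_mul_div_atTop (c : ι → ℤ) (θ : ι → ℝ) :
    Tendsto (fun G : ℝ ↦ ((∑ i, c i * ⌊G * θ i⌋ : ℤ) : ℝ) / G) atTop
      (𝓝 (∑ i, (c i : ℝ) * θ i)) := by
  refine (tendsto_finsetSum Finset.univ fun i _ ↦
    (tendsto_floor_mul_div_atTop (θ i)).const_mul (c i : ℝ)).congr fun G ↦ ?_
  push_cast
  simp only [Finset.sum_div, mul_div_assoc, mul_comm G]

theorem eventually_sum_mul_floor_ne_zero {c : ι → ℤ} {θ : ι → ℝ}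
    (h : ∑ i, (c i : ℝ) * θ i ≠ 0) : ∀ᶠ G : ℝ in atTop, ∑ i, c i * ⌊G * θ i⌋ ≠ 0 :=
  ((tendsto_sum_mul_floor_mul_div_atTop c θ).eventually_ne h).mono
    fun _ hG h0 ↦ hG (by simp [h0])

theorem eventually_injOn_sum_mul_floor {θ : ι → ℝ} (hθ : LinearIndependent ℚ θ)
    (S : Finset (ι → ℕ)) :
    ∀ᶠ G : ℝ in atTop, Set.InjOn (fun x : ι → ℕ ↦ ∑ i, (x i : ℤ) * ⌊G * θ i⌋) S := by
  have hpair : ∀ x y : ι → ℕ, x ≠ y →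
      ∀ᶠ G : ℝ in atTop, ∑ i, ((x i : ℤ) - y i) * ⌊G * θ i⌋ ≠ 0 := by
    intro x y hxy
    refine eventually_sum_mul_floor_ne_zero (hθ.sum_intCast_mul_ne_zero fun h ↦ hxy ?_)
    funext i
    simpa [sub_eq_zero] using congr_fun h i
  have hall : ∀ᶠ G : ℝ in atTop, ∀ x ∈ S, ∀ y ∈ S,
      x ≠ y → ∑ i, ((x i : ℤ) - y i) * ⌊G * θ i⌋ ≠ 0 :=
    (eventually_all_finset S).2 fun x _ ↦ (eventually_all_finset S).2 fun y _ ↦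
      eventually_imp_distrib_left.2 (hpair x y)
  filter_upwards [hall] with G hG x hx y hy hxy
  by_contra hne
  exact hG x hx y hy hne (by simpa [sub_mul, sub_eq_zero] using hxy)

end

theorem sidon_set_from_digit_truncation_general
    (n : ℕ)
    (θ : Fin n → ℝ) (hpos : ∀ i, 0 < θ i) (hθ : LinearIndependent ℚ θ)
    (g : ℕ) (hg : 2 ≤ g) :
    ∃ ℓ₀ : ℕ, ∀ ℓ : ℕ, ℓ₀ ≤ ℓ →
      (∀ i, 0 < ⌊(g : ℝ) ^ ℓ * θ i⌋) ∧
      (∀ x y : Fin n → ℕ, (∑ i, x i = 2) → (∑ i, y i = 2) →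
        (∑ i, (x i : ℤ) * ⌊(g : ℝ) ^ ℓ * θ i⌋) =
          (∑ i, (y i : ℤ) * ⌊(g : ℝ) ^ ℓ * θ i⌋) → x = y) := by
  have hpow : Tendsto (fun ℓ : ℕ ↦ (g : ℝ) ^ ℓ) atTop atTop :=
    tendsto_pow_atTop_atTop_of_one_lt (by exact_mod_cast hg)
  obtain ⟨ℓ₀, hℓ₀⟩ := eventually_atTop.mp <| hpow.eventually <| (eventually_floor_mul_pos hpos).and
    (eventually_injOn_sum_mul_floor hθ (Finset.Nat.antidiagonalTuple n 2))
  refine ⟨ℓ₀, fun ℓ hℓ ↦ ⟨(hℓ₀ ℓ hℓ).1, fun x y hx hy ↦ (hℓ₀ ℓ hℓ).2 ?_ ?_⟩⟩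
  exacts [Finset.Nat.mem_antidiagonalTuple.2 hx, Finset.Nat.mem_antidiagonalTuple.2 hy]

/-- If `θ 1, …, θ n` are positive reals, ℚ-linearly independent,
and `g ≥ 2`, then for all sufficiently large `ℓ` the integer parts
`⌊g^ℓ θ i⌋` form a Sidon set of positive integers. -/
theorem sidon_set_from_digit_truncation
    (n : ℕ) (hn : 0 < n)
    (θ : Fin n → ℝ) (hpos : ∀ i, 0 < θ i) (hθ : LinearIndependent ℚ θ)
    (g : ℕ) (hg : 2 ≤ g) :
    ∃ ℓ₀ : ℕ, ∀ ℓ : ℕ, ℓ₀ ≤ ℓ →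
      (∀ i, 0 < ⌊(g : ℝ) ^ ℓ * θ i⌋) ∧
      (∀ x y : Fin n → ℕ, (∑ i, x i = 2) → (∑ i, y i = 2) →
        (∑ i, (x i : ℤ) * ⌊(g : ℝ) ^ ℓ * θ i⌋) =
          (∑ i, (y i : ℤ) * ⌊(g : ℝ) ^ ℓ * θ i⌋) → x = y) :=
  sidon_set_from_digit_truncation_general n θ hpos hθ g hg
end
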